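/- Let P ⊂ ℝ² be a lattice polygon with Δ_P(x) = Δ_P(y) = l. Then the lattice width of P satisfies w(P) = min(l, Δ_P(x+y), Δ_P(x−y)). -/

import Mathlib

/-- The lattice polygon determined by a nonempty finite set `V` of lattice points:
the convex hull in `ℝ²` of the corresponding real points. -/
def latticePoly2 (V : Finset (Fin 2 → ℤ)) : Set (Fin 2 → ℝ) :=
  convexHull ℝ ((fun v : Fin 2 → ℤ => fun i => (v i : ℝ)) '' (V : Set (Fin 2 → ℤ)))

/-- `Δ_P(a₀·x + a₁·y) = w_a(P)`, the lattice width of `P ⊆ ℝ²` in the direction `a ∈ ℤ²`: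
the sup minus the inf of the linear form `p ↦ a·p` over `P`. -/
noncomputable def width2 (P : Set (Fin 2 → ℝ)) (a : Fin 2 → ℤ) : ℝ :=
  sSup ((fun p => ∑ i, (a i : ℝ) * p i) '' P) - sInf ((fun p => ∑ i, (a i : ℝ) * p i) '' P)

/-- `T(P) ⊆ [0,l]²` for some affine unimodular transformation `T : p ↦ A·p + v`. -/
def FitsInSquare (P : Set (Fin 2 → ℝ)) (l : ℤ) : Prop :=
  ∃ (A : Matrix (Fin 2) (Fin 2) ℤ) (v : Fin 2 → ℤ),
    (A.det = 1 ∨ A.det = -1) ∧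
    ∀ p ∈ P, ∀ i, ((A.map (fun z : ℤ => (z : ℝ))).mulVec p + fun j => (v j : ℝ)) i ∈
      Set.Icc (0 : ℝ) (l : ℝ)

/-- The set of lattice widths of `P` in all primitive directions `a ∈ ℤ²`. -/
def widthSet2 (P : Set (Fin 2 → ℝ)) : Set ℝ :=
  {w | ∃ a : Fin 2 → ℤ, Int.gcd (a 0) (a 1) = 1 ∧ width2 P a = w}

/-- `T(P) ⊆ [0,a] × [0,b]` for some affine unimodular transformation `T : p ↦ A·p + v`. -/
def FitsInRect (P : Set (Fin 2 → ℝ)) (a b : ℤ) : Prop :=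
  ∃ (A : Matrix (Fin 2) (Fin 2) ℤ) (v : Fin 2 → ℤ),
    (A.det = 1 ∨ A.det = -1) ∧
    ∀ p ∈ P, ((A.map (fun z : ℤ => (z : ℝ))).mulVec p + fun j => (v j : ℝ)) 0 ∈
        Set.Icc (0 : ℝ) (a : ℝ) ∧
      ((A.map (fun z : ℤ => (z : ℝ))).mulVec p + fun j => (v j : ℝ)) 1 ∈
        Set.Icc (0 : ℝ) (b : ℝ)

/-!
Only the directions `a` with `|a₀| = |a₁|` can beat `l`. Evaluating `a = a₀ e₁ + a₁ e₂` on two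
points of `P` realising `Δ_P(x) = l`, whose `y`-coordinates differ by at most `Δ_P(y) = l`, gives
`w_a(P) ≥ (|a₀| - |a₁|) l`, and symmetrically `w_a(P) ≥ (|a₁| - |a₀|) l`; so `w_a(P) ≥ l` as soon
as `|a₀| ≠ |a₁|`. If `|a₀| = |a₁|`, primitivity forces `a = ±(1, 1)` or `a = ±(1, -1)`.
-/

def dot2 (a : Fin 2 → ℤ) (p : Fin 2 → ℝ) : ℝ :=
  ∑ i, (a i : ℝ) * p i

lemma continuous_dot2 (a : Fin 2 → ℤ) : Continuous (dot2 a) := by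
  unfold dot2; fun_prop

lemma dot2_add_smul (p q : ℤ) (b c : Fin 2 → ℤ) (u : Fin 2 → ℝ) :
    dot2 (p • b + q • c) u = p * dot2 b u + q * dot2 c u := by
  simp only [dot2, Fin.sum_univ_two, Pi.add_apply, Pi.smul_apply, smul_eq_mul]
  push_cast; ring

lemma dot2_neg (a : Fin 2 → ℤ) (u : Fin 2 → ℝ) : dot2 (-a) u = -dot2 a u := by
  simp only [dot2, Fin.sum_univ_two, Pi.neg_apply]
  push_cast; ring

lemma width2_eq_dot2 (P : Set (Fin 2 → ℝ)) (a : Fin 2 → ℤ) :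
    width2 P a = sSup (dot2 a '' P) - sInf (dot2 a '' P) := rfl

lemma isCompact_latticePoly2 (V : Finset (Fin 2 → ℤ)) : IsCompact (latticePoly2 V) :=
  (V.finite_toSet.image _).isCompact_convexHull ℝ

section Compact

variable {P : Set (Fin 2 → ℝ)} (hP : IsCompact P)
include hP

lemma width2_nonneg (a : Fin 2 → ℤ) : 0 ≤ width2 P a :=
  sub_nonneg.2 <| Real.sInf_le_sSup _ ((hP.image (continuous_dot2 a)).bddBelow)
    ((hP.image (continuous_dot2 a)).bddAbove)

lemma abs_dot2_sub_le_width2 (a : Fin 2 → ℤ) {u v : Fin 2 → ℝ} (hu : u ∈ P) (hv : v ∈ P) :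
    |dot2 a u - dot2 a v| ≤ width2 P a := by
  have hK := hP.image (continuous_dot2 a)
  have le_sup (w) (hw : w ∈ P) : dot2 a w ≤ sSup (dot2 a '' P) :=
    le_csSup hK.bddAbove (Set.mem_image_of_mem _ hw)
  have inf_le (w) (hw : w ∈ P) : sInf (dot2 a '' P) ≤ dot2 a w :=
    csInf_le hK.bddBelow (Set.mem_image_of_mem _ hw)
  rw [width2_eq_dot2, abs_le]
  constructor <;> linarith [le_sup u hu, le_sup v hv, inf_le u hu, inf_le v hv]

lemma exists_width2_eq_dot2_sub (hne : P.Nonempty) (a : Fin 2 → ℤ) :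
    ∃ u ∈ P, ∃ v ∈ P, width2 P a = dot2 a u - dot2 a v := by
  have hK := hP.image (continuous_dot2 a)
  obtain ⟨u, hu, hu'⟩ := hK.sSup_mem (hne.image _)
  obtain ⟨v, hv, hv'⟩ := hK.sInf_mem (hne.image _)
  exact ⟨u, hu, v, hv, by rw [width2_eq_dot2, hu', hv']⟩

/-- Evaluate `p • b + q • c` at two points of `P` realising `width2 P b`. -/
lemma abs_mul_width2_sub_abs_mul_width2_le (p q : ℤ) (b c : Fin 2 → ℤ) :
    |(p : ℝ)| * width2 P b - |(q : ℝ)| * width2 P c ≤ width2 P (p • b + q • c) := by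
  rcases P.eq_empty_or_nonempty with rfl | hne
  · simp [width2]
  obtain ⟨u, hu, v, hv, hb⟩ := exists_width2_eq_dot2_sub hP hne b
  have hc := abs_dot2_sub_le_width2 hP c hu hv
  have ha := abs_dot2_sub_le_width2 hP (p • b + q • c) hu hv
  rw [dot2_add_smul, dot2_add_smul] at ha
  calc |(p : ℝ)| * width2 P b - |(q : ℝ)| * width2 P c
      ≤ |p * (dot2 b u - dot2 b v)| - |q * (dot2 c u - dot2 c v)| := by
        have hb0 : 0 ≤ dot2 b u - dot2 b v := hb ▸ width2_nonneg hP b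
        rw [abs_mul, abs_mul, hb, abs_of_nonneg hb0]
        gcongr
    _ ≤ |p * (dot2 b u - dot2 b v) + q * (dot2 c u - dot2 c v)| := by
        simpa using abs_sub_abs_le_abs_sub (p * (dot2 b u - dot2 b v))
          (-(q * (dot2 c u - dot2 c v)))
    _ ≤ width2 P (p • b + q • c) := by
        convert ha using 2; ring

end Compact

lemma width2_neg (P : Set (Fin 2 → ℝ)) (a : Fin 2 → ℤ) : width2 P (-a) = width2 P a := by
  have : dot2 (-a) '' P = -(dot2 a '' P) := by
    rw [← Set.image_neg_eq_neg, Set.image_image]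
    simp only [dot2_neg]
  rw [width2_eq_dot2, width2_eq_dot2, this, Real.sSup_neg, Real.sInf_neg]; ring

lemma eq_of_gcd_eq_one_of_abs_eq {a : Fin 2 → ℤ} (hgcd : Int.gcd (a 0) (a 1) = 1)
    (h : |a 0| = |a 1|) : a = ![1, 1] ∨ a = -![1, 1] ∨ a = ![1, -1] ∨ a = -![1, -1] := by
  have hnat : (a 0).natAbs = (a 1).natAbs := by
    simpa only [Int.natAbs_abs] using congrArg Int.natAbs h
  rw [Int.gcd_eq_natAbs_gcd_natAbs, hnat, Nat.gcd_self] at hgcd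
  have ha : a = ![a 0, a 1] := by ext i; fin_cases i <;> rfl
  rcases Int.natAbs_eq_iff.1 (hnat.trans hgcd) with h0 | h0 <;>
    rcases Int.natAbs_eq_iff.1 hgcd with h1 | h1 <;>
    rw [ha, h0, h1] <;> simp

lemma width2_eq_or_eq_of_abs_eq (P : Set (Fin 2 → ℝ)) {a : Fin 2 → ℤ}
    (hgcd : Int.gcd (a 0) (a 1) = 1) (h : |a 0| = |a 1|) :
    width2 P a = width2 P ![1, 1] ∨ width2 P a = width2 P ![1, -1] := by
  rcases eq_of_gcd_eq_one_of_abs_eq hgcd h with rfl | rfl | rfl | rfl <;>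
    simp only [width2_neg, true_or, or_true]

lemma le_width2_of_abs_ne {P : Set (Fin 2 → ℝ)} (hP : IsCompact P) {l : ℝ}
    (hx : width2 P ![1, 0] = l) (hy : width2 P ![0, 1] = l) {a : Fin 2 → ℤ}
    (h : |a 0| ≠ |a 1|) : l ≤ width2 P a := by
  have hl : 0 ≤ l := hx ▸ width2_nonneg hP _
  have hx' := abs_mul_width2_sub_abs_mul_width2_le hP (a 0) (a 1) ![1, 0] ![0, 1]
  have hy' := abs_mul_width2_sub_abs_mul_width2_le hP (a 1) (a 0) ![0, 1] ![1, 0]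
  have ha : a 0 • ![1, 0] + a 1 • ![0, 1] = a := by ext i; fin_cases i <;> simp
  rw [add_comm] at hy'
  rw [ha, hx, hy] at hx'
  rw [ha, hx, hy] at hy'
  rcases h.lt_or_gt with h | h
  · have := (Int.cast_le (R := ℝ)).2 (Int.add_one_le_of_lt h)
    push_cast at this
    nlinarith
  · have := (Int.cast_le (R := ℝ)).2 (Int.add_one_le_of_lt h)
    push_cast at this
    nlinarith

theorem latticeWidth_eq_of_touch_general (V : Finset (Fin 2 → ℤ))
    (P : Set (Fin 2 → ℝ)) (hP : P = latticePoly2 V) (l : ℤ)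
    (hx : width2 P ![1, 0] = (l : ℝ)) (hy : width2 P ![0, 1] = (l : ℝ)) :
    IsLeast (widthSet2 P) (min (l : ℝ) (min (width2 P ![1, 1]) (width2 P ![1, -1]))) := by
  have hK : IsCompact P := hP ▸ isCompact_latticePoly2 V
  refine ⟨?_, ?_⟩
  · exact min_rec' _ ⟨![1, 0], by decide, hx⟩
      (min_rec' _ ⟨![1, 1], by decide, rfl⟩ ⟨![1, -1], by decide, rfl⟩)
  · rintro _ ⟨a, hgcd, rfl⟩
    rcases eq_or_ne |a 0| |a 1| with h | h
    · rcases width2_eq_or_eq_of_abs_eq P hgcd h with h | h <;> rw [h] <;> simp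
    · exact (min_le_left _ _).trans (le_width2_of_abs_ne hK hx hy h)

/-- If `Δ_P(x) = Δ_P(y) = l` then `w(P) = min(l, Δ_P(x+y), Δ_P(x−y))`. -/
theorem latticeWidth_eq_of_touch (V : Finset (Fin 2 → ℤ)) (hV : V.Nonempty)
    (P : Set (Fin 2 → ℝ)) (hP : P = latticePoly2 V) (l : ℤ)
    (hx : width2 P ![1, 0] = (l : ℝ)) (hy : width2 P ![0, 1] = (l : ℝ)) :
    IsLeast (widthSet2 P) (min (l : ℝ) (min (width2 P ![1, 1]) (width2 P ![1, -1]))) :=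
  latticeWidth_eq_of_touch_general V P hP l hx hy
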